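/- arXiv:1006.3275 — 2 statements merged into one kernel-verified Lean document; each statement's English description precedes it below -/
import Mathlib

section
/- The normalized information distance e(x,y) = max{K(x|y), K(y|x)} / max{K(x), K(y)} is not upper semicomputable. -/
/-- Binary strings. -/
abbrev BStr := List Bool

/-- Canonical encoding of binary strings as natural numbers. -/
def strEnc : BStr → ℕ := Encodable.encode

/-- The fixed universal machine: program `p` (a natural number, decoded as a
partial recursive code) run on input `y`. -/
def univ (p y : ℕ) : Part ℕ := (Denumerable.ofNat Nat.Partrec.Code p).eval y

/-- The length (in bits) of a program. -/
def plen (p : ℕ) : ℕ := Nat.size p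

/-- Conditional Kolmogorov complexity on natural numbers: the length of the
shortest program producing `x` from `y` on the universal machine. -/
noncomputable def Knat (x y : ℕ) : ℕ :=
  sInf {n | ∃ p, plen p = n ∧ univ p y = Part.some x}

/-- Conditional Kolmogorov complexity `K(x|y)` of binary strings. -/
noncomputable def Kcond (x y : BStr) : ℕ := Knat (strEnc x) (strEnc y)

/-- `K(x|n)`: complexity of the string `x` conditioned on the canonical
encoding of the natural number `n`. -/
noncomputable def KcondNat (x : BStr) (n : ℕ) : ℕ := Knat (strEnc x) n

/-- Unconditional Kolmogorov complexity `K(x) = K(x|ε)`. -/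
noncomputable def K (x : BStr) : ℕ := Kcond x []

/-- The information distance `E(x,y) = max{K(x|y), K(y|x)}`. -/
noncomputable def E (x y : BStr) : ℕ := max (Kcond x y) (Kcond y x)

/-- The normalized information distance (NID). -/
noncomputable def NID (x y : BStr) : ℝ :=
  (E x y : ℝ) / (max (K x) (K y) : ℝ)

/-- Time-bounded universal machine: run program `p` on input `y` for at most
`t` steps. -/
def univT (t p y : ℕ) : Option ℕ :=
  Nat.Partrec.Code.evaln t (Denumerable.ofNat Nat.Partrec.Code p) y

/-- Time-bounded conditional Kolmogorov complexity `K^t(x|y)` (with the time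
bound measured in the length of the output `x`); `⊤` if no program succeeds. -/
noncomputable def KcondT (t : ℕ → ℕ) (x y : BStr) : ℕ∞ :=
  sInf {n : ℕ∞ | ∃ p : ℕ, (plen p : ℕ∞) = n ∧
    univT (t x.length) p (strEnc y) = some (strEnc x)}

/-- `K^t(x|n)`: time-bounded complexity conditioned on the natural number `n`. -/
noncomputable def KcondNatT (t : ℕ → ℕ) (x : BStr) (m : ℕ) : ℕ∞ :=
  sInf {n : ℕ∞ | ∃ p : ℕ, (plen p : ℕ∞) = n ∧
    univT (t x.length) p m = some (strEnc x)}

/-- Time-bounded information distance `E^t`. -/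
noncomputable def ET (t : ℕ → ℕ) (x y : BStr) : ℕ∞ :=
  max (KcondT t x y) (KcondT t y x)

/-- A real-valued function on naturals is upper semicomputable if it has a
total computable rational-valued approximation, nonincreasing in the stage,
converging to it. -/
def UpperSemicomputable (f : ℕ → ℝ) : Prop :=
  ∃ φ : ℕ → ℕ → ℚ, Computable₂ φ ∧ (∀ x k, φ x (k + 1) ≤ φ x k) ∧
    ∀ x, Filter.Tendsto (fun k => (φ x k : ℝ)) Filter.atTop (nhds (f x))

/-- Lower semicomputability: `-f` is upper semicomputable. -/
def LowerSemicomputable (f : ℕ → ℝ) : Prop :=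
  UpperSemicomputable (fun x => -f x)

/-- Upper semicomputability for real-valued functions of pairs of strings. -/
def UpperSemicomputable2 (f : BStr → BStr → ℝ) : Prop :=
  ∃ φ : BStr × BStr → ℕ → ℚ, Computable₂ φ ∧
    (∀ x k, φ x (k + 1) ≤ φ x k) ∧
    ∀ x : BStr × BStr,
      Filter.Tendsto (fun k => (φ x k : ℝ)) Filter.atTop (nhds (f x.1 x.2))

/-- Lower semicomputability for real-valued functions of pairs of strings. -/
def LowerSemicomputable2 (f : BStr → BStr → ℝ) : Prop :=
  UpperSemicomputable2 (fun x y => -f x y)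


/-- Upper semicomputability for real-valued functions of strings. -/
def UpperSemicomputableS (f : BStr → ℝ) : Prop :=
  ∃ φ : BStr → ℕ → ℚ, Computable₂ φ ∧ (∀ x k, φ x (k + 1) ≤ φ x k) ∧
    ∀ x, Filter.Tendsto (fun k => (φ x k : ℝ)) Filter.atTop (nhds (f x))

/-!
On the diagonal `NID x x = K(x|x) / K(x)`, and `1 ≤ K(x|x) ≤ c` for nonempty `x`, so `NID x x`
is squeezed between `1 / K(x)` and `c / K(x)`. If `NID` had a computable nonincreasing
approximation `φ`, searching for a pair `(x, k)` with `x ≠ []` and `φ (x, x) k * m < 1` would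
always succeed (strings of large complexity exist) and every hit satisfies `m < K(x)`. This is
a computable sequence of strings with `m < K(G m)`, which is impossible by Berry's argument:
`G m` is printed by a program of length `O(2^m)`, and composing with `m ↦ 2^(m+5)` beats that.
-/

open Encodable Denumerable Nat.Partrec

theorem Nat.gcd_eq_findGreatest (a b : ℕ) :
    Nat.gcd a b = Nat.findGreatest (fun k => k ∣ a ∧ k ∣ b) (a + b) := by
  rcases Nat.eq_zero_or_pos (Nat.gcd a b) with h | h
  · obtain ⟨rfl, rfl⟩ := Nat.gcd_eq_zero_iff.1 h
    simp
  · symm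
    rw [Nat.findGreatest_eq_iff]
    refine ⟨?_, fun _ => ⟨Nat.gcd_dvd_left a b, Nat.gcd_dvd_right a b⟩,
      fun k hk _ hdvd => (Nat.le_of_dvd h (Nat.dvd_gcd hdvd.1 hdvd.2)).not_gt hk⟩
    rcases Nat.eq_zero_or_pos a with rfl | ha
    · simp
    · exact (Nat.gcd_le_left b ha).trans (Nat.le_add_right a b)

theorem Primrec.nat_gcd : Primrec₂ Nat.gcd := by
  have hdvd : PrimrecRel fun (k a : ℕ) => k ∣ a :=
    (Primrec.eq.comp (Primrec.nat_mod.comp Primrec.snd Primrec.fst) (Primrec.const 0)).of_eq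
      fun _ => Nat.dvd_iff_mod_eq_zero.symm
  have hcommon : PrimrecRel fun (ab : ℕ × ℕ) (k : ℕ) => k ∣ ab.1 ∧ k ∣ ab.2 :=
    (hdvd.comp Primrec.snd (Primrec.fst.comp Primrec.fst)).and
      (hdvd.comp Primrec.snd (Primrec.snd.comp Primrec.fst))
  exact (Primrec.nat_findGreatest (Primrec.nat_add.comp Primrec.fst Primrec.snd) hcommon).of_eq
    fun ab => (Nat.gcd_eq_findGreatest ab.1 ab.2).symm

theorem computable_of_countP_range_eq {p : ℕ → Prop} [DecidablePred p] (hp : PrimrecPred p)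
    {g : ℕ → ℕ} (hg : ∀ n, p (g n) ∧ (List.range (g n)).countP (p ·) = n) :
    Computable g := by
  set c : ℕ → ℕ := fun k => (List.range k).countP (p ·) with hc_def
  -- `c` is monotone and `c (g n + 1) = n + 1`, so `g n` is the least `k` with `n < c (k + 1)`.
  have hc_succ : ∀ k, c (k + 1) = c k + if p k then 1 else 0 := fun k => by
    simp only [hc_def, List.range_succ, List.countP_append]
    by_cases h : p k <;> simp [h]
  have hc_mono : Monotone c := monotone_nat_of_le_succ fun k => by rw [hc_succ]; omega
  have hc : Primrec c := (Primrec.list_length.comp ((Primrec.listFilter hp).comp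
    Primrec.list_range)).of_eq fun k => (List.countP_eq_length_filter ..).symm
  have hstep : PrimrecRel fun n k => n < c (k + 1) :=
    Primrec.nat_lt.comp Primrec.fst (hc.comp (Primrec.succ.comp Primrec.snd))
  have hsearch : Partrec fun n => Nat.rfind fun k => Part.some (decide (n < c (k + 1))) :=
    Partrec.rfind (Primrec₂.to_comp hstep.decide).partrec₂
  refine Partrec.of_eq_tot hsearch fun n => Nat.mem_rfind.2 ⟨?_, fun hm => ?_⟩
  · rw [hc_succ, if_pos (hg n).1, show c (g n) = n from (hg n).2]
    simp
  · have := (hc_mono (Nat.succ_le_of_lt hm)).trans (hg n).2.le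
    simpa using this

theorem exists_computable_of_forall_exists {α β : Type*} [Primcodable α] [Primcodable β]
    {p : α → β → Bool} (hp : Computable₂ p) (h : ∀ a, ∃ b, p a b = true) :
    ∃ g : α → β, Computable g ∧ ∀ a, p a (g a) = true := by
  set hit : α → ℕ → Option β :=
    fun a n => (decode n).bind fun b => cond (p a b) (some b) none
  have hhit : Computable₂ hit :=
    Computable.option_bind (Computable.decode.comp Computable.snd)
      (Computable.cond (hp.comp (Computable.fst.comp Computable.fst) Computable.snd)
        (Computable.option_some.comp Computable.snd) (Computable.const none)).to₂
  have hdom : ∀ a, (Nat.rfindOpt (hit a)).Dom := fun a => by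
    obtain ⟨b, hb⟩ := h a
    exact Nat.rfindOpt_dom.2 ⟨encode b, b, by simp [hit, hb]⟩
  refine ⟨fun a => (Nat.rfindOpt (hit a)).get (hdom a),
    Partrec.of_eq_tot (Partrec.rfindOpt hhit) fun a => Part.get_mem _, fun a => ?_⟩
  obtain ⟨n, hn⟩ := Nat.rfindOpt_spec (Part.get_mem (hdom a))
  obtain ⟨b, -, hb⟩ := Option.bind_eq_some_iff.1 hn
  cases hpb : p a b
  · simp [hpb] at hb
  · rw [hpb, cond_true, Option.some_inj] at hb
    beta_reduce
    rwa [← hb]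

/-- The code of `q` under `Rat.instEncodable`. The `Primcodable ℚ` instance comes from
`Denumerable.ofEncodableOfInfinite`, under which `q` is coded by the number of pair codes of
rationals below `ratPairCode q`. -/
def ratPairCode (q : ℚ) : ℕ := Nat.pair (Equiv.intEquivNat q.num) q.den

def IsRatPairCode (k : ℕ) : Prop :=
  0 < k.unpair.2 ∧ Nat.Coprime ((k.unpair.1 + 1) / 2) k.unpair.2

instance : DecidablePred IsRatPairCode := fun _ => inferInstanceAs (Decidable (_ ∧ _))

theorem intEquivNat_add_one_div_two (z : ℤ) : (Equiv.intEquivNat z + 1) / 2 = z.natAbs := by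
  cases z with
  | ofNat n => show (2 * n + 1) / 2 = n; omega
  | negSucc n => show (2 * n + 1 + 1) / 2 = n + 1; omega

theorem mem_range_ratPairCode_iff (k : ℕ) : k ∈ Set.range ratPairCode ↔ IsRatPairCode k := by
  constructor
  · rintro ⟨q, rfl⟩
    simp only [IsRatPairCode, ratPairCode, Nat.unpair_pair, intEquivNat_add_one_div_two]
    exact ⟨q.pos, q.reduced⟩
  · rintro ⟨hden, hcop⟩
    set z := Equiv.intEquivNat.symm k.unpair.1
    have hz : Equiv.intEquivNat z = k.unpair.1 := Equiv.apply_symm_apply _ _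
    rw [← hz, intEquivNat_add_one_div_two] at hcop
    refine ⟨⟨z, k.unpair.2, hden.ne', hcop⟩, ?_⟩
    simp [ratPairCode, hz]

theorem primrecPred_isRatPairCode : PrimrecPred IsRatPairCode := by
  have hnum : Primrec fun k : ℕ => (k.unpair.1 + 1) / 2 :=
    Primrec.nat_div.comp (Primrec.succ.comp (Primrec.fst.comp Primrec.unpair)) (Primrec.const 2)
  have hden : Primrec fun k : ℕ => k.unpair.2 := Primrec.snd.comp Primrec.unpair
  exact (Primrec.nat_lt.comp (Primrec.const 0) hden).and
    (Primrec.eq.comp (Primrec.nat_gcd.comp hnum hden) (Primrec.const 1))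

attribute [local instance] Encodable.decidableRangeEncode in
theorem encode_rat_eq_countP (q : ℚ) :
    @encode ℚ Primcodable.toEncodable q =
      (List.range (ratPairCode q)).countP (IsRatPairCode ·) := by
  have : @encode ℚ Primcodable.toEncodable q = (List.range (ratPairCode q)).countP
      (· ∈ Set.range (@encode ℚ Rat.instEncodable)) := rfl
  rw [this]
  exact List.countP_congr fun k _ => by
    simp only [decide_eq_true_iff]
    exact mem_range_ratPairCode_iff k

theorem computable_ratPairCode : Computable ratPairCode := by
  have hinv : Computable fun n => ratPairCode (ofNat ℚ n) :=
    computable_of_countP_range_eq primrecPred_isRatPairCode fun n =>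
      ⟨(mem_range_ratPairCode_iff _).1 ⟨_, rfl⟩,
        (encode_rat_eq_countP _).symm.trans (encode_ofNat n)⟩
  exact (hinv.comp Computable.encode).of_eq fun q => congrArg ratPairCode (ofNat_encode q)

/-- `Equiv.intEquivNat` codes `n ≥ 0` as `2 * n` and `-(n + 1)` as `2 * n + 1`. -/
theorem rat_mul_natCast_lt_one_iff (q : ℚ) (n : ℕ) :
    q * n < 1 ↔ (ratPairCode q).unpair.1 % 2 = 1 ∨
      (ratPairCode q).unpair.1 / 2 * n < (ratPairCode q).unpair.2 := by
  have hden : (0 : ℚ) < q.den := by exact_mod_cast q.pos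
  have hlt : q * n < 1 ↔ (q.num : ℚ) * n < q.den := by
    conv_lhs => rw [← Rat.num_div_den q, div_mul_eq_mul_div, div_lt_one hden]
  rw [hlt]
  simp only [ratPairCode, Nat.unpair_pair]
  generalize q.num = z
  cases z with
  | ofNat a =>
    show (a : ℚ) * n < q.den ↔ 2 * a % 2 = 1 ∨ 2 * a / 2 * n < q.den
    rw [Nat.mul_mod_right, Nat.mul_div_cancel_left a two_pos]
    norm_cast
    simp
  | negSucc a =>
    show ((Int.negSucc a : ℤ) : ℚ) * n < q.den ↔ (2 * a + 1) % 2 = 1 ∨ _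
    simp only [Nat.mul_add_mod_self_left, true_or, iff_true]
    have : ((Int.negSucc a : ℤ) : ℚ) * n ≤ 0 :=
      mul_nonpos_of_nonpos_of_nonneg (by exact_mod_cast (Int.negSucc_lt_zero a).le) n.cast_nonneg
    linarith

theorem computable₂_decide_rat_mul_natCast_lt_one :
    Computable₂ fun (q : ℚ) (n : ℕ) => decide (q * n < 1) := by
  have hcode : PrimrecRel fun (k n : ℕ) =>
      k.unpair.1 % 2 = 1 ∨ k.unpair.1 / 2 * n < k.unpair.2 :=
    (Primrec.eq.comp (Primrec.nat_mod.comp (Primrec.fst.comp (Primrec.unpair.comp Primrec.fst))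
      (Primrec.const 2)) (Primrec.const 1)).or
    (Primrec.nat_lt.comp (Primrec.nat_mul.comp (Primrec.nat_div.comp
      (Primrec.fst.comp (Primrec.unpair.comp Primrec.fst)) (Primrec.const 2)) Primrec.snd)
      (Primrec.snd.comp (Primrec.unpair.comp Primrec.fst)))
  exact ((Primrec₂.to_comp hcode.decide).comp (computable_ratPairCode.comp Computable.fst)
    Computable.snd).of_eq fun qn => by simp [rat_mul_natCast_lt_one_iff]

theorem univ_encode (c : Code) (y : ℕ) : univ (encode c) y = c.eval y := by
  rw [univ, ofNat_encode]

theorem Knat_le {x y p : ℕ} (h : univ p y = Part.some x) : Knat x y ≤ plen p :=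
  Nat.sInf_le ⟨p, rfl, h⟩

theorem exists_plen_eq_Knat (x y : ℕ) : ∃ p, plen p = Knat x y ∧ univ p y = Part.some x :=
  Nat.sInf_mem (s := {n | ∃ p, plen p = n ∧ univ p y = Part.some x})
    ⟨_, encode (Code.const x), rfl, by rw [univ_encode, Code.eval_const]⟩

theorem Knat_pos {x : ℕ} (hx : x ≠ 0) (y : ℕ) : 0 < Knat x y := by
  obtain ⟨p, hp, hu⟩ := exists_plen_eq_Knat x y
  refine Nat.pos_of_ne_zero fun h0 => hx ?_
  rw [h0, plen, Nat.size_eq_zero] at hp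
  subst hp
  exact Part.some_inj.1 (hu.symm.trans (univ_encode Code.zero y))

theorem finite_setOf_Knat_le (y n : ℕ) : {x | Knat x y ≤ n}.Finite := by
  choose p hp hu using fun x => exists_plen_eq_Knat x y
  refine (Set.finite_Iio (2 ^ n)).of_injOn (f := p) (fun x hx => ?_) fun x₁ _ x₂ _ h => ?_
  · exact Nat.size_le.1 ((hp x).trans_le hx)
  · exact Part.some_inj.1 ((hu x₁).symm.trans (h ▸ hu x₂))

theorem strEnc_ne_zero {x : BStr} (hx : x ≠ []) : strEnc x ≠ 0 :=
  fun h => hx (encode_injective (h.trans rfl))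

theorem Kcond_pos {x : BStr} (hx : x ≠ []) (y : BStr) : 0 < Kcond x y :=
  Knat_pos (strEnc_ne_zero hx) _

theorem Kcond_self_le (x : BStr) : Kcond x x ≤ plen (encode Code.id) :=
  Knat_le (by rw [univ_encode, Code.eval_id])

theorem K_nil : K [] = 0 :=
  Nat.le_zero.1 (Knat_le (p := encode Code.zero) (univ_encode Code.zero 0))

theorem exists_lt_K (n : ℕ) : ∃ x : BStr, n < K x := by
  by_contra! h
  exact (finite_setOf_Knat_le 0 n).not_infinite
    (Set.infinite_of_injective_forall_mem encode_injective (f := strEnc) h)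

theorem size_pair_le (a b : ℕ) : (Nat.pair a b).size ≤ 2 * max a.size b.size := by
  set s := max a.size b.size
  have hmax : max a b + 1 ≤ 2 ^ s := Nat.succ_le_of_lt <| max_lt
    (a.lt_size_self.trans_le (Nat.pow_le_pow_right two_pos (le_max_left _ _)))
    (b.lt_size_self.trans_le (Nat.pow_le_pow_right two_pos (le_max_right _ _)))
  refine Nat.size_le.2 ?_
  calc Nat.pair a b < (max a b + 1) ^ 2 := Nat.pair_lt_max_add_one_sq a b
    _ ≤ (2 ^ s) ^ 2 := Nat.pow_le_pow_left hmax 2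
    _ = 2 ^ (2 * s) := by rw [← pow_mul, mul_comm]

theorem size_encodeCode_comp_le (f g : Code) :
    (Code.encodeCode (f.comp g)).size ≤
      2 * max (Code.encodeCode f).size (Code.encodeCode g).size + 4 := by
  have hpair := Nat.size_le.1 (size_pair_le (Code.encodeCode f) (Code.encodeCode g))
  refine Nat.size_le.2 ?_
  rw [pow_add]
  simp only [Code.encodeCode]
  omega

/-- `Code.const m` is `m` nested compositions with `Code.succ`, so its code size is exponential. -/
theorem size_encodeCode_const_le (m : ℕ) :
    (Code.encodeCode (Code.const m)).size + 4 ≤ 8 * 2 ^ m := by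
  induction m with
  | zero => simp [Code.const, Code.encodeCode]
  | succ m ih =>
    have hcomp := size_encodeCode_comp_le Code.succ (Code.const m)
    have hsucc : (Code.encodeCode Code.succ).size = 1 := Nat.size_one
    rw [hsucc] at hcomp
    rw [pow_succ]
    show (Code.encodeCode (Code.succ.comp (Code.const m))).size + 4 ≤ _
    omega

theorem K_le_of_computable {G : ℕ → BStr} (hG : Computable G) :
    ∃ C, ∀ m, K (G m) ≤ 16 * 2 ^ m + C := by
  obtain ⟨c, hc⟩ := Code.exists_code.1 (Partrec.nat_iff.1 (Computable.encode.comp hG).partrec)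
  refine ⟨2 * (Code.encodeCode c).size + 4, fun m => ?_⟩
  have hrun : univ (encode (c.comp (Code.const m))) 0 = Part.some (strEnc (G m)) := by
    rw [univ_encode]
    show (Code.const m).eval 0 >>= c.eval = _
    rw [Code.eval_const, hc]
    exact Part.bind_some m _
  have hconst := size_encodeCode_const_le m
  calc K (G m) ≤ plen (encode (c.comp (Code.const m))) := Knat_le hrun
    _ ≤ 2 * max (Code.encodeCode c).size (Code.encodeCode (Code.const m)).size + 4 :=
      size_encodeCode_comp_le c (Code.const m)
    _ ≤ 16 * 2 ^ m + (2 * (Code.encodeCode c).size + 4) := by omega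

theorem not_exists_computable_lt_K :
    ¬ ∃ G : ℕ → BStr, Computable G ∧ ∀ m, m < K (G m) := by
  rintro ⟨G, hG, hGK⟩
  have hpow : Computable fun m : ℕ => 2 ^ (m + 5) :=
    (Primrec₂.unpaired'.1 Nat.Primrec.pow).to_comp.comp (Computable.const 2)
      (Primrec.nat_add.comp Primrec.id (Primrec.const 5)).to_comp
  obtain ⟨C, hC⟩ := K_le_of_computable (hG.comp hpow)
  have hlow := hGK (2 ^ (C + 5))
  have hup := hC C
  have hC_lt : C < 2 ^ C := Nat.lt_two_pow_self
  have h32 : 2 ^ (C + 5) = 32 * 2 ^ C := by rw [pow_add]; ring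
  omega

theorem UpperSemicomputable2.diag {f : BStr → BStr → ℝ} (hf : UpperSemicomputable2 f) :
    UpperSemicomputableS fun x => f x x := by
  obtain ⟨φ, hφ, hmono, hlim⟩ := hf
  exact ⟨fun x k => φ (x, x) k, hφ.comp (Computable.pair Computable.fst Computable.fst)
    Computable.snd, fun x k => hmono (x, x) k, fun x => hlim (x, x)⟩

theorem lt_K_of_one_div_K_le {x : BStr} (hx : x ≠ []) {r : ℝ} (hr : 1 / (K x : ℝ) ≤ r)
    {m : ℕ} (hm : r * m < 1) : m < K x := by
  have hK : (0 : ℝ) < K x := by exact_mod_cast Kcond_pos hx []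
  have : (m : ℝ) / K x < 1 :=
    calc (m : ℝ) / K x = 1 / K x * m := by ring
      _ ≤ r * m := by gcongr
      _ < 1 := hm
  exact_mod_cast (div_lt_one hK).1 this

theorem exists_ne_nil_mul_lt_one {f : BStr → ℝ} {C : ℕ} (hup : ∀ x, f x ≤ C / K x)
    (m : ℕ) : ∃ x, x ≠ [] ∧ f x * m < 1 := by
  obtain ⟨x, hx⟩ := exists_lt_K (C * m)
  have hx_ne : x ≠ [] := by rintro rfl; simp [K_nil] at hx
  have hK : (0 : ℝ) < K x := by exact_mod_cast Kcond_pos hx_ne []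
  refine ⟨x, hx_ne, ?_⟩
  calc f x * m ≤ C / K x * m := by gcongr; exact hup x
    _ = C * m / K x := by ring
    _ < 1 := (div_lt_one hK).2 (by exact_mod_cast hx)

theorem UpperSemicomputableS.exists_computable_lt_K {f : BStr → ℝ} (hf : UpperSemicomputableS f)
    (C : ℕ) (hlow : ∀ x, x ≠ [] → 1 / (K x : ℝ) ≤ f x) (hup : ∀ x, f x ≤ C / K x) :
    ∃ G : ℕ → BStr, Computable G ∧ ∀ m, m < K (G m) := by
  obtain ⟨φ, hφ, hmono, hlim⟩ := hf
  have hle : ∀ x k, f x ≤ φ x k := fun x k =>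
    (antitone_nat_of_succ_le fun k => by exact_mod_cast hmono x k).le_of_tendsto (hlim x) k
  set p : ℕ → BStr × ℕ → Bool :=
    fun m xk => decide (xk.1 ≠ []) && decide (φ xk.1 xk.2 * m < 1)
  have hp : Computable₂ p := by
    have hne : Computable fun q : ℕ × (BStr × ℕ) => decide (q.2.1 ≠ []) :=
      (Primrec.eq.comp (Primrec.fst.comp Primrec.snd) (Primrec.const [])).not.decide.to_comp
    have hlt : Computable fun q : ℕ × (BStr × ℕ) => decide (φ q.2.1 q.2.2 * q.1 < 1) :=
      computable₂_decide_rat_mul_natCast_lt_one.comp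
        (hφ.comp (Computable.fst.comp Computable.snd) (Computable.snd.comp Computable.snd))
        Computable.fst
    exact Primrec.and.to_comp.comp hne hlt
  have hex : ∀ m, ∃ xk, p m xk = true := fun m => by
    obtain ⟨x, hx_ne, hfx⟩ := exists_ne_nil_mul_lt_one hup m
    obtain ⟨k, hk⟩ := (((hlim x).mul_const (m : ℝ)).eventually (gt_mem_nhds hfx)).exists
    have hk' : φ x k * m < 1 := by exact_mod_cast hk
    exact ⟨(x, k), by simp [p, hx_ne, hk']⟩
  obtain ⟨g, hg, hgp⟩ := exists_computable_of_forall_exists hp hex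
  refine ⟨fun m => (g m).1, Computable.fst.comp hg, fun m => ?_⟩
  obtain ⟨hne, hlt⟩ : (g m).1 ≠ [] ∧ φ (g m).1 (g m).2 * m < 1 := by simpa [p] using hgp m
  exact lt_K_of_one_div_K_le hne ((hlow _ hne).trans (hle _ _)) (by exact_mod_cast hlt)

theorem NID_self (x : BStr) : NID x x = Kcond x x / K x := by
  simp [NID, E]

theorem one_div_K_le_NID_self {x : BStr} (hx : x ≠ []) : 1 / (K x : ℝ) ≤ NID x x := by
  rw [NID_self]
  gcongr
  exact_mod_cast Kcond_pos hx x

theorem NID_self_le (x : BStr) : NID x x ≤ plen (encode Code.id) / K x := by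
  rw [NID_self]
  gcongr
  exact_mod_cast Kcond_self_le x

theorem NID_not_upperSemicomputable :
    ¬ UpperSemicomputable2 NID := fun h =>
  not_exists_computable_lt_K <|
    h.diag.exists_computable_lt_K _ (fun _ => one_div_K_le_NID_self) NID_self_le
end

section
/- For every length n and computable time bound t with t(n) ≥ cn for a large enough constant c, there exist strings v and w of length n such that K(v) ≥ n - c₁, E(v,w) ≤ c₃, and E^t(v,w) ≥ n - c₁·log n - c₃, where c₃ depends on t but not on n and c₁ is independent of t and n. -/
/-!
Take `w = v XOR u`, where `u` of length `n` depends only on `n` and `t` and is found by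
exhaustive search; one fixed program then maps `v` to `w` and back, so `E(v, w) = O(1)`.
The search is for a `u` given by double counting: on a given input, a program outputs
`v XOR u` for at most one `u`, so some `u` has at most `2 ^ (n - 2)` inputs `v` whose XOR
with `u` some program below `2 ^ (n - 2)` computes within `t n` steps. These programs print at
most `2 ^ (n - 2)` further strings from the empty input, so some `v` of length `n` avoids both
sets, and then `K(v)` and `K^t(w | v)` are at least `n - 1`.
-/

open scoped Finset

namespace Finset

variable {α β γ : Type*}

theorem card_filter_exists_le_sum (I : Finset β) (Q : Finset α) (S : α → β → Prop)
    [∀ a b, Decidable (S a b)] :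
    #{b ∈ I | ∃ a ∈ Q, S a b} ≤ ∑ a ∈ Q, #{b ∈ I | S a b} := by
  classical
  calc #{b ∈ I | ∃ a ∈ Q, S a b} ≤ #(Q.biUnion fun a => {b ∈ I | S a b}) := by
        refine card_le_card fun b hb => ?_
        obtain ⟨hbI, a, haQ, hab⟩ := mem_filter.1 hb
        exact mem_biUnion.2 ⟨a, haQ, mem_filter.2 ⟨hbI, hab⟩⟩
    _ ≤ _ := card_biUnion_le

theorem card_filter_exists_le_of_unique (I : Finset β) (Q : Finset α) (S : α → β → Prop)
    [∀ a b, Decidable (S a b)] (hS : ∀ a ∈ Q, ∀ b ∈ I, ∀ b' ∈ I, S a b → S a b' → b = b') :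
    #{b ∈ I | ∃ a ∈ Q, S a b} ≤ #Q :=
  (card_filter_exists_le_sum I Q S).trans <| card_eq_sum_ones Q ▸ sum_le_sum fun a ha =>
    card_le_one.2 fun b hb b' hb' => by
      rw [mem_filter] at hb hb'
      exact hS a ha b hb.1 b' hb'.1 hb.2 hb'.2

theorem exists_mul_card_filter_exists_le (I : Finset β) (Q : Finset α) {J : Finset γ}
    (hJ : J.Nonempty) (R : α → β → γ → Prop) [∀ a b c, Decidable (R a b c)]
    (hR : ∀ a ∈ Q, ∀ b ∈ I, ∀ c ∈ J, ∀ c' ∈ J, R a b c → R a b c' → c = c') :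
    ∃ c ∈ J, #J * #{b ∈ I | ∃ a ∈ Q, R a b c} ≤ #Q * #I := by
  have hsum : ∑ c ∈ J, #{b ∈ I | ∃ a ∈ Q, R a b c} ≤ #Q * #I :=
    calc ∑ c ∈ J, #{b ∈ I | ∃ a ∈ Q, R a b c}
        ≤ ∑ c ∈ J, ∑ a ∈ Q, ∑ b ∈ I, if R a b c then 1 else 0 :=
          sum_le_sum fun c _ => (card_filter_exists_le_sum I Q _).trans_eq <|
            sum_congr rfl fun a _ => card_filter _ _
      _ = ∑ a ∈ Q, ∑ b ∈ I, #{c ∈ J | R a b c} := by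
          rw [sum_comm]
          refine sum_congr rfl fun a _ => ?_
          rw [sum_comm]
          exact sum_congr rfl fun b _ => (card_filter _ _).symm
      _ ≤ ∑ a ∈ Q, ∑ b ∈ I, 1 :=
          sum_le_sum fun a ha => sum_le_sum fun b hb => card_le_one.2 fun c hc c' hc' => by
            rw [mem_filter] at hc hc'
            exact hR a ha b hb c hc.1 c' hc'.1 hc.2 hc'.2
      _ = #Q * #I := by simp
  refine exists_le_of_sum_le hJ ?_
  rw [← mul_sum, sum_const, smul_eq_mul]
  exact Nat.mul_le_mul_left _ hsum

end Finset

theorem Primrec.nat_pow : Primrec₂ ((· ^ ·) : ℕ → ℕ → ℕ) :=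
  ((Primrec.nat_iff.2 Nat.Primrec.pow).comp Primrec₂.natPair).of_eq fun p => by simp

theorem Primrec.nat_testBit : Primrec₂ Nat.testBit :=
  (PrimrecRel.decide (R := fun (m i : ℕ) => m / 2 ^ i % 2 = 1) <| Primrec.eq.comp₂
    (Primrec.nat_mod.comp₂ (Primrec.nat_div.comp₂ .left
      (Primrec.nat_pow.comp₂ (Primrec₂.const 2) .right)) (Primrec₂.const 2))
    (Primrec₂.const 1)).of_eq fun _ _ => Nat.testBit_eq_decide_div_mod_eq.symm

theorem Primrec.card_filter_range {α : Type*} [Primcodable α] {f : α → ℕ} {q : α → ℕ → Prop}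
    [DecidableRel q] (hf : Primrec f) (hq : PrimrecRel q) :
    Primrec fun a => #{i ∈ Finset.range (f a) | q a i} :=
  (Primrec.list_length.comp <| Primrec.listFilterMap (Primrec.list_range.comp hf)
    (Primrec.ite hq (Primrec.option_some.comp Primrec.snd) (Primrec.const none)).to₂).of_eq
    fun a => by
      simp [Finset.card, Finset.range_val, Multiset.range, ← List.filterMap_eq_filter,
        Option.guard]

theorem PrimrecPred.exists_mem_range {α : Type*} [Primcodable α] {f : α → ℕ} {q : α → ℕ → Prop}
    [DecidableRel q] (hf : Primrec f) (hq : PrimrecRel q) :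
    PrimrecPred fun a => ∃ i ∈ Finset.range (f a), q a i :=
  (PrimrecRel.comp Primrec.nat_lt (Primrec.const 0) (Primrec.card_filter_range hf hq)).of_eq
    fun a => by simp [Finset.card_pos, Finset.filter_nonempty_iff]

namespace InfoDistance

open Nat.Partrec

theorem eq_of_testBit_eq_of_lt {n i j : ℕ} (hi : i < 2 ^ n) (hj : j < 2 ^ n)
    (h : ∀ k < n, i.testBit k = j.testBit k) : i = j := by
  refine Nat.eq_of_testBit_eq fun k => ?_
  rcases lt_or_ge k n with hk | hk
  · exact h k hk
  · have hk' : 2 ^ n ≤ 2 ^ k := Nat.pow_le_pow_right two_pos hk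
    rw [Nat.testBit_lt_two_pow (hi.trans_le hk'), Nat.testBit_lt_two_pow (hj.trans_le hk')]

def bits (n i : ℕ) : BStr := (List.range n).map i.testBit

@[simp] theorem length_bits (n i : ℕ) : (bits n i).length = n := by simp [bits]

theorem bits_injOn (n : ℕ) : Set.InjOn (bits n) (Set.Iio (2 ^ n)) := fun i hi j hj h =>
  eq_of_testBit_eq_of_lt hi hj fun k hk => by
    simpa [bits, hk] using congrArg (·[k]?) h

def xorWith (j : ℕ) (v : BStr) : BStr :=
  (List.range v.length).map fun k => v.getD k false ^^ j.testBit k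

@[simp] theorem length_xorWith (j : ℕ) (v : BStr) : (xorWith j v).length = v.length := by
  simp [xorWith]

theorem xorWith_xorWith (j : ℕ) (v : BStr) : xorWith j (xorWith j v) = v := by
  refine List.ext_getElem (by simp) fun k hk _ => ?_
  simp only [length_xorWith] at hk
  simp [xorWith, hk]

theorem eq_of_xorWith_eq {j j' : ℕ} {v : BStr} (hj : j < 2 ^ v.length) (hj' : j' < 2 ^ v.length)
    (h : xorWith j v = xorWith j' v) : j = j' :=
  eq_of_testBit_eq_of_lt hj hj' fun k hk => by
    simpa [xorWith, hk] using congrArg (·[k]?) h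

theorem Knat_le {x y p : ℕ} (h : univ p y = Part.some x) : Knat x y ≤ plen p :=
  Nat.sInf_le ⟨p, rfl, h⟩

theorem succ_le_Knat {x y k : ℕ} (h : ∀ p < 2 ^ k, univ p y ≠ Part.some x) : k + 1 ≤ Knat x y := by
  -- `sInf ∅ = 0`, so a program printing `x` is needed: take a constant one.
  have hne : {n | ∃ p, plen p = n ∧ univ p y = Part.some x}.Nonempty :=
    ⟨_, Encodable.encode (Code.const x), rfl, by simp [univ, Code.eval_const]⟩
  obtain ⟨p, hp, hpx⟩ := Nat.sInf_mem hne
  by_contra! hlt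
  exact h p (Nat.size_le.1 (by unfold Knat plen at *; omega)) hpx

def RunsTo (τ p : ℕ) (x y : BStr) : Prop := univT τ p (strEnc x) = some (strEnc y)

instance (τ p : ℕ) (x y : BStr) : Decidable (RunsTo τ p x y) :=
  inferInstanceAs (Decidable (_ = _))

theorem succ_le_KcondT {t : ℕ → ℕ} {x y : BStr} {k : ℕ}
    (h : ∀ p < 2 ^ k, ¬ RunsTo (t y.length) p x y) : ((k + 1 : ℕ) : ℕ∞) ≤ KcondT t y x := by
  refine le_sInf ?_
  rintro _ ⟨p, rfl, hp⟩
  by_contra! hlt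
  have hlt : plen p < k + 1 := by exact_mod_cast hlt
  exact h p (Nat.size_le.1 (Nat.lt_succ_iff.1 hlt)) hp

theorem RunsTo.unique {τ p : ℕ} {x y y' : BStr} (h : RunsTo τ p x y) (h' : RunsTo τ p x y') :
    y = y' :=
  Encodable.encode_injective (Option.some_injective _ (h.symm.trans h'))

def fastInputs (τ k n j : ℕ) : Finset ℕ :=
  {i ∈ Finset.range (2 ^ n) |
    ∃ p ∈ Finset.range (2 ^ k), RunsTo τ p (bits n i) (xorWith j (bits n i))}

theorem exists_card_fastInputs_le (τ k n : ℕ) : ∃ j < 2 ^ n, #(fastInputs τ k n j) ≤ 2 ^ k := by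
  obtain ⟨j, hj, hcard⟩ := Finset.exists_mul_card_filter_exists_le (Finset.range (2 ^ n))
    (Finset.range (2 ^ k)) (Finset.nonempty_range_iff.2 (pow_ne_zero n two_ne_zero))
    (fun p i j => RunsTo τ p (bits n i) (xorWith j (bits n i)))
    fun p _ i _ j hj j' hj' h h' => by
      rw [Finset.mem_range, ← length_bits n i] at hj hj'
      exact eq_of_xorWith_eq hj hj' (h.unique h')
  simp only [Finset.card_range, mul_comm (2 ^ k)] at hcard
  exact ⟨j, Finset.mem_range.1 hj, Nat.le_of_mul_le_mul_left hcard (Nat.two_pow_pos n)⟩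

/-- Found by exhaustive search rather than by choice, so that it is computable. -/
def goodShift (τ k n : ℕ) : ℕ :=
  Nat.findGreatest (fun j => #(fastInputs τ k n j) ≤ 2 ^ k) (2 ^ n - 1)

theorem card_fastInputs_goodShift_le (τ k n : ℕ) :
    #(fastInputs τ k n (goodShift τ k n)) ≤ 2 ^ k := by
  obtain ⟨j, hj, hcard⟩ := exists_card_fastInputs_le τ k n
  exact Nat.findGreatest_spec (P := fun j => #(fastInputs τ k n j) ≤ 2 ^ k) (by omega) hcard

open Classical in
theorem card_compressible_le (k n : ℕ) :
    #{i ∈ Finset.range (2 ^ n) |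
      ∃ p ∈ Finset.range (2 ^ k), univ p (strEnc []) = Part.some (strEnc (bits n i))} ≤ 2 ^ k :=
  (Finset.card_filter_exists_le_of_unique _ _ _ fun _ _ _ hi _ hi' h h' =>
    bits_injOn n (Finset.mem_range.1 hi) (Finset.mem_range.1 hi') <|
      Encodable.encode_injective <| Part.some_inj.1 (h.symm.trans h')).trans_eq
    (Finset.card_range _)

theorem exists_incompressible_not_fast (τ k n : ℕ) (hkn : k + 1 < n) :
    ∃ i, (∀ p < 2 ^ k, univ p (strEnc []) ≠ Part.some (strEnc (bits n i))) ∧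
      ∀ p < 2 ^ k, ¬ RunsTo τ p (bits n i) (xorWith (goodShift τ k n) (bits n i)) := by
  classical
  have hcard : #({i ∈ Finset.range (2 ^ n) |
      ∃ p ∈ Finset.range (2 ^ k), univ p (strEnc []) = Part.some (strEnc (bits n i))} ∪
      fastInputs τ k n (goodShift τ k n)) < #(Finset.range (2 ^ n)) :=
    calc _ ≤ 2 ^ k + 2 ^ k := (Finset.card_union_le _ _).trans <|
            add_le_add (card_compressible_le k n) (card_fastInputs_goodShift_le τ k n)
      _ = 2 ^ (k + 1) := by ring
      _ < _ := by rw [Finset.card_range]; exact Nat.pow_lt_pow_right one_lt_two hkn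
  obtain ⟨i, hi, hbad⟩ := Finset.exists_mem_notMem_of_card_lt_card hcard
  rw [Finset.mem_range] at hi
  simp only [fastInputs, Finset.mem_union, Finset.mem_filter, Finset.mem_range, hi, true_and]
    at hbad
  push Not at hbad
  exact ⟨i, hbad⟩

theorem primrec_bits : Primrec₂ bits :=
  Primrec.list_map (Primrec.list_range.comp Primrec.fst)
    (Primrec.nat_testBit.comp₂ (Primrec.snd.comp₂ Primrec₂.left) Primrec₂.right)

theorem primrec_xorWith : Primrec₂ xorWith :=
  Primrec.list_map (Primrec.list_range.comp (Primrec.list_length.comp Primrec.snd))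
    ((Primrec.dom_bool₂ (· ^^ ·)).comp₂
      ((Primrec.list_getD false).comp₂ (Primrec.snd.comp₂ Primrec₂.left) Primrec₂.right)
      (Primrec.nat_testBit.comp₂ (Primrec.fst.comp₂ Primrec₂.left) Primrec₂.right))

theorem primrecPred_runsTo : PrimrecPred fun a : (ℕ × ℕ) × BStr × BStr =>
    RunsTo a.1.1 a.1.2 a.2.1 a.2.2 :=
  Primrec.eq.comp
    (Code.primrec_evaln.comp (((Primrec.fst.comp Primrec.fst).pair
      ((Primrec.ofNat Code).comp (Primrec.snd.comp Primrec.fst))).pair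
      (Primrec.encode.comp (Primrec.fst.comp Primrec.snd))))
    (Primrec.option_some.comp (Primrec.encode.comp (Primrec.snd.comp Primrec.snd)))

theorem primrec_card_fastInputs : Primrec fun a : (ℕ × ℕ) × ℕ × ℕ =>
    #(fastInputs a.1.1 a.1.2 a.2.1 a.2.2) := by
  -- `b = ((a, i), p)`
  have hn : Primrec fun b : (((ℕ × ℕ) × ℕ × ℕ) × ℕ) × ℕ => b.1.1.2.1 :=
    Primrec.fst.comp (Primrec.snd.comp (Primrec.fst.comp Primrec.fst))
  have hx : Primrec fun b : (((ℕ × ℕ) × ℕ × ℕ) × ℕ) × ℕ => bits b.1.1.2.1 b.1.2 :=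
    primrec_bits.comp hn (Primrec.snd.comp Primrec.fst)
  have hy : Primrec fun b : (((ℕ × ℕ) × ℕ × ℕ) × ℕ) × ℕ =>
      xorWith b.1.1.2.2 (bits b.1.1.2.1 b.1.2) :=
    primrec_xorWith.comp (Primrec.snd.comp (Primrec.snd.comp (Primrec.fst.comp Primrec.fst))) hx
  have hrun : PrimrecRel fun (c : ((ℕ × ℕ) × ℕ × ℕ) × ℕ) (p : ℕ) =>
      RunsTo c.1.1.1 p (bits c.1.2.1 c.2) (xorWith c.1.2.2 (bits c.1.2.1 c.2)) :=
    primrecPred_runsTo.comp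
      (((Primrec.fst.comp (Primrec.fst.comp (Primrec.fst.comp Primrec.fst))).pair
        Primrec.snd).pair (hx.pair hy))
  exact Primrec.card_filter_range (Primrec.nat_pow.comp (Primrec.const 2)
    (Primrec.fst.comp Primrec.snd)) (PrimrecPred.exists_mem_range (Primrec.nat_pow.comp
      (Primrec.const 2) (Primrec.snd.comp (Primrec.fst.comp Primrec.fst))) hrun)

theorem primrec_goodShift : Primrec fun a : (ℕ × ℕ) × ℕ => goodShift a.1.1 a.1.2 a.2 := by
  have hcard : Primrec fun b : ((ℕ × ℕ) × ℕ) × ℕ => #(fastInputs b.1.1.1 b.1.1.2 b.1.2 b.2) :=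
    primrec_card_fastInputs.comp ((Primrec.fst.comp Primrec.fst).pair
      ((Primrec.snd.comp Primrec.fst).pair Primrec.snd)) |>.of_eq fun _ => rfl
  have hbound : Primrec fun b : ((ℕ × ℕ) × ℕ) × ℕ => 2 ^ b.1.1.2 :=
    Primrec.nat_pow.comp (Primrec.const 2) (Primrec.snd.comp (Primrec.fst.comp Primrec.fst))
  exact Primrec.nat_findGreatest
    (Primrec.nat_sub.comp (Primrec.nat_pow.comp (Primrec.const 2) Primrec.snd) (Primrec.const 1))
    (Primrec.nat_le.comp hcard hbound)

theorem exists_code_eval_strEnc {F : BStr → BStr} (hF : Computable F) :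
    ∃ c : Code, ∀ v, c.eval (strEnc v) = Part.some (strEnc (F v)) := by
  obtain ⟨c, hc⟩ := Code.exists_code.1 hF.partrec
  exact ⟨c, fun v => by simp [hc, strEnc, Encodable.encodek]⟩

theorem exists_E_le_of_involutive {F : BStr → BStr} (hF : Computable F)
    (hinv : Function.Involutive F) : ∃ c, ∀ v, E v (F v) ≤ c := by
  obtain ⟨c, hc⟩ := exists_code_eval_strEnc hF
  have hK : ∀ v, Kcond (F v) v ≤ plen (Encodable.encode c) := fun v =>
    Knat_le (by rw [univ, Denumerable.ofNat_encode, hc])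
  exact ⟨_, fun v => max_le (by simpa only [hinv v] using hK (F v)) (hK v)⟩

/-- The string `w = v XOR u` of the construction. -/
def partner (t : ℕ → ℕ) (v : BStr) : BStr :=
  xorWith (goodShift (t v.length) (v.length - 2) v.length) v

@[simp] theorem length_partner (t : ℕ → ℕ) (v : BStr) : (partner t v).length = v.length :=
  length_xorWith _ _

theorem partner_involutive (t : ℕ → ℕ) : Function.Involutive (partner t) := fun v => by
  rw [partner, length_partner, partner, xorWith_xorWith]

theorem computable_partner {t : ℕ → ℕ} (ht : Computable t) : Computable (partner t) := by
  have hlen : Computable fun v : BStr => v.length := Primrec.list_length.to_comp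
  have hshift : Computable fun v : BStr => goodShift (t v.length) (v.length - 2) v.length :=
    primrec_goodShift.to_comp.comp
      (((ht.comp hlen).pair (Primrec.nat_sub.to_comp.comp hlen (Computable.const 2))).pair hlen)
      |>.of_eq fun _ => rfl
  exact (primrec_xorWith.to_comp.comp hshift Computable.id).of_eq fun _ => rfl

theorem exists_incompressible_hard (t : ℕ → ℕ) (n : ℕ) :
    ∃ v : BStr, v.length = n ∧ n - 1 ≤ K v ∧ ((n - 1 : ℕ) : ℕ∞) ≤ KcondT t (partner t v) v := by
  obtain hn | hn := lt_or_ge n 2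
  · exact ⟨bits n 0, length_bits n 0, by omega, by simp [show n - 1 = 0 by omega]⟩
  obtain ⟨i, hK, hT⟩ := exists_incompressible_not_fast (t n) (n - 2) n (by omega)
  have hsucc : n - 2 + 1 = n - 1 := by omega
  refine ⟨bits n i, length_bits n i, hsucc ▸ succ_le_Knat hK, hsucc ▸ succ_le_KcondT ?_⟩
  simpa [partner] using hT

end InfoDistance

theorem lemma_xor :
    ∃ c c₁ : ℕ, ∀ t : ℕ → ℕ, Computable t → (∀ n, c * n ≤ t n) →
      ∃ c₃ : ℕ, ∀ n : ℕ, ∃ v w : BStr, v.length = n ∧ w.length = n ∧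
        n - c₁ ≤ K v ∧
        E v w ≤ c₃ ∧
        ((n - c₁ * Nat.log 2 n - c₃ : ℕ) : ℕ∞) ≤ ET t v w := by
  refine ⟨0, 1, fun t ht _ => ?_⟩
  obtain ⟨c, hE⟩ := InfoDistance.exists_E_le_of_involutive (InfoDistance.computable_partner ht)
    (InfoDistance.partner_involutive t)
  refine ⟨c + 1, fun n => ?_⟩
  obtain ⟨v, hv, hK, hT⟩ := InfoDistance.exists_incompressible_hard t n
  refine ⟨v, InfoDistance.partner t v, hv, by simp [hv], hK, (hE v).trans c.le_succ, ?_⟩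
  calc ((n - 1 * Nat.log 2 n - (c + 1) : ℕ) : ℕ∞) ≤ ((n - 1 : ℕ) : ℕ∞) := Nat.cast_le.2 (by omega)
    _ ≤ KcondT t (InfoDistance.partner t v) v := hT
    _ ≤ ET t v (InfoDistance.partner t v) := le_max_right _ _
end
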